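/- Let S be the unilateral shift on ℓ²(ℕ), let π : B(ℓ²(ℕ)) → Q be the quotient map onto the Calkin algebra, and let s = π(S). Let u ∈ C(S¹, ℂ) be the standard unitary generator u(z) = z, let ι : C(S¹, ℂ) → C([0,1], ℂ) be the unital *-homomorphism ι(f)(t) = f(exp(2πit)), and let φ : C(S¹, ℂ) → Q be the unital *-homomorphism with φ(u) = s. Then there is no *-homomorphism ψ : C([0,1], ℂ) → Q such that ψ ∘ ι = φ. -/

import Mathlib

/-!
Since `ι u = exp h` with `h t = 2πit`, a factorization `ψ` would make `s = ψ (exp h) = exp (ψ h)`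
an exponential in the Calkin algebra. Exponentials lift along the quotient map to exponentials,
which are invertible, so `S` would be a compact perturbation of an invertible operator. By the
Fredholm alternative an injective compact perturbation of an invertible operator is invertible,
but the shift is injective and not surjective.
-/

open scoped unitInterval

/-- The inclusion `Circle → ℂ` as a continuous map; this is the standard unitary
generator `u` of `C(S¹, ℂ)`. -/
noncomputable def circleGen : C(Circle, ℂ) :=
  ⟨fun z => (z : ℂ), by continuity⟩

open scoped ENNReal
open NormedSpace

section CompactPerturbation

variable {𝕜 X : Type*} [NontriviallyNormedField 𝕜] [NormedAddCommGroup X] [NormedSpace 𝕜 X]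
  [CompleteSpace X]

theorem IsCompactOperator.isUnit_one_add_of_injective {K : X →L[𝕜] X} (hK : IsCompactOperator K)
    (hinj : Function.Injective ⇑(1 + K)) : IsUnit (1 + K) := by
  rcases hK.hasEigenvalue_or_mem_resolventSet (μ := -1) (by simp) with hev | hres
  · obtain ⟨x, hx⟩ := hev.exists_hasEigenvector
    have hKx : K x = -x := by simpa using hx.apply_eq_smul
    exact absurd (hinj (by simp [hKx])) hx.2
  · rwa [spectrum.mem_resolventSet_iff, map_neg, map_one, ← neg_add', IsUnit.neg_iff] at hres

theorem isUnit_of_injective_of_isCompactOperator_sub {T U : X →L[𝕜] X} (hU : IsUnit U)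
    (hTU : IsCompactOperator (T - U)) (hT : Function.Injective T) : IsUnit T := by
  obtain ⟨u, rfl⟩ := hU
  have hT_eq : T = u * (1 + ↑u⁻¹ * (T - u)) := by
    rw [mul_add, mul_one, ← mul_assoc, Units.mul_inv, one_mul, add_sub_cancel]
  have hK : IsCompactOperator (↑u⁻¹ * (T - u) : X →L[𝕜] X) := hTU.clm_comp _
  refine hT_eq ▸ u.isUnit.mul (hK.isUnit_one_add_of_injective fun x y hxy => hT ?_)
  rw [hT_eq]
  exact congrArg (u : X →L[𝕜] X) hxy

end CompactPerturbation

@[simp]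
theorem lp.evalCLM_apply {𝕜 α : Type*} {E : α → Type*} [∀ i, NormedAddCommGroup (E i)]
    [NormedRing 𝕜] [∀ i, Module 𝕜 (E i)] [∀ i, IsBoundedSMul 𝕜 (E i)] {p : ℝ≥0∞} [Fact (1 ≤ p)]
    (i : α) (x : lp E p) : lp.evalCLM 𝕜 E p i x = x i :=
  rfl

section UnilateralShift

variable {𝕜 : Type*} [NormedField 𝕜] {p : ℝ≥0∞} [Fact (1 ≤ p)]

def IsUnilateralShift (S : lp (fun _ : ℕ => 𝕜) p →L[𝕜] lp (fun _ : ℕ => 𝕜) p) : Prop :=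
  ∀ n, S (lp.single p n 1) = lp.single p (n + 1) 1

variable {S : lp (fun _ : ℕ => 𝕜) p →L[𝕜] lp (fun _ : ℕ => 𝕜) p}

namespace IsUnilateralShift

theorem apply_zero (hS : IsUnilateralShift S) (hp : p ≠ ⊤) (x : lp (fun _ : ℕ => 𝕜) p) :
    S x 0 = 0 := by
  have h := lp.ext_continuousLinearMap hp (f := (lp.evalCLM 𝕜 _ p 0).comp S) (g := 0) fun i => by
    ext
    simp [lp.singleContinuousLinearMap_apply, hS i, lp.single_apply]
  simpa using congr($h x)

theorem apply_succ (hS : IsUnilateralShift S) (hp : p ≠ ⊤) (x : lp (fun _ : ℕ => 𝕜) p) (n : ℕ) :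
    S x (n + 1) = x n := by
  have h := lp.ext_continuousLinearMap hp (f := (lp.evalCLM 𝕜 _ p (n + 1)).comp S)
    (g := lp.evalCLM 𝕜 _ p n) fun i => by
    ext
    simp [lp.singleContinuousLinearMap_apply, hS i, lp.single_apply, Pi.single_apply]
  simpa using congr($h x)

theorem injective (hS : IsUnilateralShift S) (hp : p ≠ ⊤) : Function.Injective S :=
  fun x y hxy => lp.ext <| funext fun n => by
    rw [← hS.apply_succ hp x n, hxy, hS.apply_succ hp y n]

theorem not_surjective (hS : IsUnilateralShift S) (hp : p ≠ ⊤) : ¬ Function.Surjective S := by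
  intro hsurj
  obtain ⟨x, hx⟩ := hsurj (lp.single p 0 1)
  simpa [hx] using hS.apply_zero hp x

end IsUnilateralShift

end UnilateralShift

section Exponential

variable {A B : Type*} [CStarAlgebra A] [CStarAlgebra B]

open scoped CStarAlgebra in
theorem map_exp_of_map_one {F : Type*} [FunLike F A B] [NonUnitalAlgHomClass F ℂ A B]
    [StarHomClass F A B] (ψ : F) (hψ : ψ 1 = 1) (a : A) : ψ (exp a) = exp (ψ a) := by
  -- the lemmas about `exp` need a `ℚ`-algebra instance, which is not inferred from `ℂ`
  let +nondep : NormedAlgebra ℚ A := .restrictScalars ℚ ℂ A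
  let +nondep : NormedAlgebra ℚ B := .restrictScalars ℚ ℂ B
  exact map_exp ({ (ψ : A →ₙ+* B) with map_one' := hψ } : A →+* B) (map_continuous ψ) a

theorem exists_isUnit_map_eq_map_exp {Q : Type*} [CStarAlgebra Q] (θ : B →⋆ₐ[ℂ] Q)
    (hθ : Function.Surjective θ) {F : Type*} [FunLike F A Q] [NonUnitalAlgHomClass F ℂ A Q]
    [StarHomClass F A Q] (ψ : F) (hψ : ψ 1 = 1) (a : A) :
    ∃ b : B, IsUnit b ∧ θ b = ψ (exp a) := by
  obtain ⟨b, hb⟩ := hθ (ψ a)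
  let +nondep : NormedAlgebra ℚ B := .restrictScalars ℚ ℂ B
  refine ⟨exp b, isUnit_exp b, ?_⟩
  rw [map_exp_of_map_one θ (map_one θ), hb, map_exp_of_map_one ψ hψ]

end Exponential

@[simp]
theorem circleGen_apply (z : Circle) : circleGen z = z :=
  rfl

theorem map_circleGen_eq_exp (ι : C(Circle, ℂ) →⋆ₐ[ℂ] C(I, ℂ))
    (hι : ∀ (f : C(Circle, ℂ)) (t : I), ι f t = f (Circle.exp (2 * Real.pi * (t : ℝ)))) :
    ι circleGen = exp ⟨fun t => (2 * Real.pi * (t : ℝ) : ℂ) * Complex.I, by fun_prop⟩ := by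
  ext t
  rw [hι, exp_continuousMap_eq]
  simp [Circle.coe_exp, ← Complex.exp_eq_exp_ℂ]

/-- Let `s = θ S` be the image of the unilateral shift `S` in the Calkin algebra `Q`,
let `u ∈ C(S¹, ℂ)` be the standard unitary generator, let
`ι : C(S¹, ℂ) → C([0,1], ℂ)` be composition with `t ↦ exp (2πit)`, and let
`φ : C(S¹, ℂ) → Q` be the unital ⋆-homomorphism with `φ u = s`.  Then there is no
⋆-homomorphism `ψ : C([0,1], ℂ) → Q` with `ψ ∘ ι = φ`.  Here the Calkin algebra is
represented as any C*-algebra `Q` together with a surjective ⋆-homomorphism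
`θ : B(ℓ²(ℕ)) → Q` whose kernel is exactly the ideal of compact operators. -/
theorem no_factorization_through_interval
    (Q : Type) [CStarAlgebra Q]
    (θ : (lp (fun _ : ℕ => ℂ) 2 →L[ℂ] lp (fun _ : ℕ => ℂ) 2) →⋆ₐ[ℂ] Q)
    (hθ : Function.Surjective θ)
    (hker : ∀ T : lp (fun _ : ℕ => ℂ) 2 →L[ℂ] lp (fun _ : ℕ => ℂ) 2,
      θ T = 0 ↔ IsCompactOperator T)
    (S : lp (fun _ : ℕ => ℂ) 2 →L[ℂ] lp (fun _ : ℕ => ℂ) 2)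
    (hS : ∀ n : ℕ, S (lp.single 2 n 1) = lp.single 2 (n + 1) 1)
    (ι : C(Circle, ℂ) →⋆ₐ[ℂ] C(I, ℂ))
    (hι : ∀ (f : C(Circle, ℂ)) (t : I), ι f t = f (Circle.exp (2 * Real.pi * (t : ℝ))))
    (φ : C(Circle, ℂ) →⋆ₐ[ℂ] Q)
    (hφ : φ circleGen = θ S) :
    ¬ ∃ ψ : C(I, ℂ) →⋆ₙₐ[ℂ] Q, ∀ f : C(Circle, ℂ), ψ (ι f) = φ f := by
  rintro ⟨ψ, hψ⟩
  have hψ_one : ψ 1 = 1 := by simpa using hψ 1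
  obtain ⟨T, hT_unit, hT⟩ := exists_isUnit_map_eq_map_exp θ hθ ψ hψ_one _
  rw [← map_circleGen_eq_exp ι hι, hψ, hφ] at hT
  have hS_compact : IsCompactOperator (S - T) := (hker _).1 (by rw [map_sub, hT, sub_self])
  have hS_shift : IsUnilateralShift S := hS
  have hS_unit := isUnit_of_injective_of_isCompactOperator_sub hT_unit hS_compact
    (hS_shift.injective ENNReal.ofNat_ne_top)
  exact hS_shift.not_surjective ENNReal.ofNat_ne_top
    (ContinuousLinearMap.isUnit_iff_bijective.1 hS_unit).surjective
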